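/- arXiv:2503.13875 — 3 statements merged into one kernel-verified Lean document; each statement's English description precedes it below -/
import Mathlib

section
/- Let v_1, …, v_k ∈ ℤ^n be vectors whose ℝ-linear span is all of ℝ^n, and let C = {λ_1 v_1 + … + λ_k v_k : λ_1, …, λ_k ∈ ℝ, λ_i ≥ 0} be the cone they generate. Then the subgroup of Hom(ℤ^n, ℤ) generated by the monoid 𝒞 = {φ ∈ Hom(ℤ^n, ℤ) : φ(x) ≥ 0 for all x ∈ C} (where φ is extended ℝ-linearly to ℝ^n) is equal to all of Hom(ℤ^n, ℤ) if and only if C is strictly convex, i.e. C contains no nonzero x with −x ∈ C. -/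
open Finset

lemma sep_step {n k : ℕ} (v : Fin k → Fin n → ℤ)
    (hpos : ∀ lam : Fin k → ℝ, (∀ i, 0 ≤ lam i) →
      (∑ i, lam i • fun j => ((v i j : ℝ))) = 0 →
      ∀ i, lam i • (fun j => ((v i j : ℝ))) = 0) :
    ∃ y : Fin n → ℝ, ∃ ε : ℝ, 0 < ε ∧
      ∀ i, (fun j => ((v i j : ℝ))) ≠ 0 → ε ≤ ∑ j, (v i j : ℝ) * y j := by
  classical
  set vR : Fin k → Fin n → ℝ := fun i j => ((v i j : ℝ)) with hvRdef
  by_cases hall : ∀ i, vR i = 0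
  · exact ⟨0, 1, one_pos, fun i hi => absurd (hall i) hi⟩
  · push_neg at hall
    obtain ⟨i0, hi0⟩ := hall
    haveI : Nonempty {i : Fin k // vR i ≠ 0} := ⟨⟨i0, hi0⟩⟩
    set ι := {i : Fin k // vR i ≠ 0}
    let A : (ι → ℝ) →ₗ[ℝ] (Fin n → ℝ) :=
      { toFun := fun lam => ∑ i : ι, lam i • vR i.1
        map_add' := by intro a b; simp [add_smul, Finset.sum_add_distrib]
        map_smul' := by intro c a; simp [Finset.smul_sum, mul_smul] }
    set K : Set (Fin n → ℝ) := A '' stdSimplex ℝ ι with hK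
    have hKconv : Convex ℝ K := (convex_stdSimplex ℝ ι).linear_image A
    have hKcl : IsClosed K :=
      ((isCompact_stdSimplex ℝ ι).image A.continuous_of_finiteDimensional).isClosed
    have h0 : (0 : Fin n → ℝ) ∉ K := by
      rintro ⟨lam, hlam, hA⟩
      set lam' : Fin k → ℝ := fun i => if h : vR i ≠ 0 then lam ⟨i, h⟩ else 0 with hlam'
      have hnn : ∀ i, 0 ≤ lam' i := by
        intro i
        by_cases h : vR i ≠ 0
        · simp only [hlam', dif_pos h]; exact hlam.1 _
        · simp only [hlam', dif_neg h]; exact le_rfl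
      have hsum : (∑ i, lam' i • vR i) = 0 := by
        have e1 : ∑ i ∈ univ.filter (fun i => vR i ≠ 0), lam' i • vR i
            = ∑ i : Fin k, lam' i • vR i := by
          apply Finset.sum_filter_of_ne
          intro i _ h
          by_contra hc
          exact h (by rw [hc, smul_zero])
        have e2 : ∑ i ∈ univ.filter (fun i => vR i ≠ 0), lam' i • vR i
            = ∑ i : ι, lam' i.1 • vR i.1 := by
          apply Finset.sum_subtype
          intro x; simp
        have e3 : ∑ i : ι, lam' i.1 • vR i.1 = ∑ i : ι, lam i • vR i.1 := by
          apply Finset.sum_congr rfl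
          intro i _
          congr 1
          simp [hlam', i.2]
        rw [← e1, e2, e3]
        exact hA
      have hz := hpos lam' hnn hsum
      obtain ⟨i, -, hi⟩ := Finset.exists_ne_zero_of_sum_ne_zero
        (by rw [hlam.2]; norm_num : (∑ i : ι, lam i) ≠ 0)
      have h1 : lam' i.1 = lam i := by simp [hlam', i.2]
      have h2 := hz i.1
      rw [h1, smul_eq_zero] at h2
      rcases h2 with h2 | h2
      · exact hi h2
      · exact i.2 h2
    obtain ⟨f, u, hfu, hu0⟩ := geometric_hahn_banach_closed_point hKconv hKcl h0
    have hu : u < 0 := by simpa using hu0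
    refine ⟨fun j => -f (Pi.single j 1), -u, by linarith, ?_⟩
    intro i hi
    have hvK : vR i ∈ K := by
      refine ⟨Pi.single (⟨i, hi⟩ : ι) 1, single_mem_stdSimplex ℝ _, ?_⟩
      simp only [A, LinearMap.coe_mk, AddHom.coe_mk]
      simp [Pi.single_apply, ite_smul]
      rw [Finset.sum_eq_single (⟨i, hi⟩ : ι)]
      · simp
      · intro b _ hb; simp [hb]
      · intro h; exact absurd (Finset.mem_univ _) h
    have hlin : f (vR i) = ∑ j, (v i j : ℝ) * f (Pi.single j 1) := by
      have hrepr : vR i = ∑ j, ((v i j : ℝ)) • (Pi.single j (1 : ℝ) : Fin n → ℝ) := by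
        funext j'
        simp [Pi.single_apply, hvRdef]
      rw [hrepr, map_sum]
      simp [map_smul, smul_eq_mul]
    have hineq := hfu _ hvK
    rw [hlin] at hineq
    show -u ≤ ∑ j, (v i j : ℝ) * -f (Pi.single j 1)
    have hsum2 : ∑ j, (v i j : ℝ) * -f (Pi.single j 1)
        = -(∑ j, (v i j : ℝ) * f (Pi.single j 1)) := by
      simp [mul_neg]
    rw [hsum2]
    linarith

lemma int_step {n k : ℕ} (v : Fin k → Fin n → ℤ) (yr : Fin n → ℝ) (ε : ℝ) (hε : 0 < ε)
    (hy : ∀ i, (fun j => ((v i j : ℝ))) ≠ 0 → ε ≤ ∑ j, (v i j : ℝ) * yr j) :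
    ∃ y : Fin n → ℤ, ∀ i, (fun j => ((v i j : ℝ))) ≠ 0 → 1 ≤ ∑ j, v i j * y j := by
  classical
  set D : ℝ := (∑ i, ∑ j, |(v i j : ℝ)|) + 1 with hD
  have hsumnn : (0:ℝ) ≤ ∑ i, ∑ j, |(v i j : ℝ)| := by positivity
  have hDpos : 0 < D := by linarith
  set δ : ℝ := ε / (2 * D) with hδdef
  have hδ : 0 < δ := by positivity
  choose q hq using fun j => exists_rat_near (yr j) hδ
  have hq_pos : ∀ i, (fun j => ((v i j : ℝ))) ≠ 0 → 0 < ∑ j, (v i j : ℚ) * q j := by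
    intro i hi
    have hrow : (∑ j, |(v i j : ℝ)|) ≤ D - 1 + 1 := by
      have : (∑ j, |(v i j : ℝ)|) ≤ ∑ i', ∑ j, |(v i' j : ℝ)| := by
        apply Finset.single_le_sum (f := fun i' => ∑ j, |(v i' j : ℝ)|)
        · intro i' _; positivity
        · exact Finset.mem_univ i
      simp [hD]; linarith
    have hbound : |∑ j, (v i j : ℝ) * ((q j : ℝ) - yr j)| ≤ D * δ := by
      calc |∑ j, (v i j : ℝ) * ((q j : ℝ) - yr j)|
          ≤ ∑ j, |(v i j : ℝ) * ((q j : ℝ) - yr j)| := Finset.abs_sum_le_sum_abs _ _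
        _ ≤ ∑ j, |(v i j : ℝ)| * δ := by
            apply Finset.sum_le_sum
            intro j _
            rw [abs_mul]
            apply mul_le_mul_of_nonneg_left _ (abs_nonneg _)
            rw [abs_sub_comm]
            exact (hq j).le
        _ = (∑ j, |(v i j : ℝ)|) * δ := by rw [Finset.sum_mul]
        _ ≤ D * δ := by
            apply mul_le_mul_of_nonneg_right _ hδ.le
            linarith
    have hDδ : D * δ = ε / 2 := by
      rw [hδdef]; field_simp
    have hreal : ε / 2 ≤ ∑ j, (v i j : ℝ) * (q j : ℝ) := by
      have hsplit : ∑ j, (v i j : ℝ) * (q j : ℝ)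
          = (∑ j, (v i j : ℝ) * yr j) + ∑ j, (v i j : ℝ) * ((q j : ℝ) - yr j) := by
        rw [← Finset.sum_add_distrib]
        apply Finset.sum_congr rfl
        intro j _; ring
      have h1 := hy i hi
      have h2 : -(D * δ) ≤ ∑ j, (v i j : ℝ) * ((q j : ℝ) - yr j) := neg_le_of_abs_le hbound
      rw [hsplit, hDδ] at *
      linarith
    have hcast : ((∑ j, (v i j : ℚ) * q j : ℚ) : ℝ) = ∑ j, (v i j : ℝ) * (q j : ℝ) := by
      push_cast; ring
    have : (0:ℝ) < ((∑ j, (v i j : ℚ) * q j : ℚ) : ℝ) := by rw [hcast]; linarith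
    exact_mod_cast this
  set d : ℕ := ∏ j, (q j).den with hd
  have hdvd : ∀ j, (q j).den ∣ d := fun j => Finset.dvd_prod_of_mem _ (Finset.mem_univ j)
  refine ⟨fun j => (q j).num * ((d / (q j).den : ℕ) : ℤ), ?_⟩
  intro i hi
  have hkey : ∀ j, (((q j).num * ((d / (q j).den : ℕ) : ℤ) : ℤ) : ℚ) = (d : ℚ) * q j := by
    intro j
    have hden : ((q j).den : ℚ) ≠ 0 := by exact_mod_cast (q j).den_nz
    have hnum : ((q j).num : ℚ) = q j * (q j).den :=
      (div_eq_iff hden).mp (Rat.num_div_den (q j))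
    have hmd : ((q j).den : ℚ) * ((d / (q j).den : ℕ) : ℚ) = (d : ℚ) := by
      exact_mod_cast congrArg (Nat.cast : ℕ → ℚ) (Nat.mul_div_cancel' (hdvd j))
    push_cast
    calc ((q j).num : ℚ) * ((d / (q j).den : ℕ) : ℚ)
        = q j * (((q j).den : ℚ) * ((d / (q j).den : ℕ) : ℚ)) := by rw [hnum]; ring
      _ = (d:ℚ) * q j := by rw [hmd]; ring
  have hdpos : 0 < d := Finset.prod_pos (fun j _ => (q j).pos)
  have hfinal : (0:ℚ) < ((∑ j, v i j * ((q j).num * ((d / (q j).den : ℕ) : ℤ)) : ℤ) : ℚ) := by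
    have h1 : ((∑ j, v i j * ((q j).num * ((d / (q j).den : ℕ) : ℤ)) : ℤ) : ℚ)
        = (d:ℚ) * ∑ j, (v i j : ℚ) * q j := by
      push_cast
      rw [Finset.mul_sum]
      apply Finset.sum_congr rfl
      intro j _
      have hk := hkey j
      push_cast at hk
      rw [hk]
      ring
    rw [h1]
    exact mul_pos (by exact_mod_cast hdpos) (hq_pos i hi)
  have hZ : (0:ℤ) < ∑ j, v i j * ((q j).num * ((d / (q j).den : ℕ) : ℤ)) := by
    exact_mod_cast hfinal
  show 1 ≤ ∑ j, v i j * ((q j).num * ((d / (q j).den : ℕ) : ℤ))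
  omega

/-- Let `v 1, …, v k ∈ ℤ^n` span `ℝ^n` and let `C` be the cone they
generate. The subgroup of `Hom(ℤ^n, ℤ)` generated by the monoid of functionals that are
non-negative on `C` is the whole dual lattice if and only if `C` is strictly convex. -/
theorem stmt3 (n k : ℕ) (v : Fin k → Fin n → ℤ)
    (hspan : Submodule.span ℝ (Set.range fun i => fun j => ((v i j : ℝ))) = ⊤)
    (C : Set (Fin n → ℝ))
    (hC : C = {x | ∃ lam : Fin k → ℝ, (∀ i, 0 ≤ lam i) ∧
      x = ∑ i, lam i • fun j => ((v i j : ℝ))}) :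
    (AddSubgroup.closure {φ : Module.Dual ℤ (Fin n → ℤ) |
        ∀ x ∈ C, 0 ≤ ∑ j, x j * ((φ (Pi.single j 1) : ℤ) : ℝ)} = ⊤) ↔
      (∀ x ∈ C, -x ∈ C → x = 0) := by
  classical
  set S : Set (Module.Dual ℤ (Fin n → ℤ)) := {φ : Module.Dual ℤ (Fin n → ℤ) |
        ∀ x ∈ C, 0 ≤ ∑ j, x j * ((φ (Pi.single j 1) : ℤ) : ℝ)} with hS
  constructor
  · intro h x hx hnx
    set T : Module.Dual ℤ (Fin n → ℤ) →+ ℝ :=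
      { toFun := fun φ => ∑ j, x j * ((φ (Pi.single j 1) : ℤ) : ℝ)
        map_zero' := by simp
        map_add' := by
          intro a b
          simp [mul_add, Finset.sum_add_distrib] } with hT
    have hSk : S ⊆ (T.ker : Set (Module.Dual ℤ (Fin n → ℤ))) := by
      intro ψ hψ
      have h1 : 0 ≤ T ψ := hψ x hx
      have h2 : 0 ≤ ∑ j, (-x) j * ((ψ (Pi.single j 1) : ℤ) : ℝ) := hψ (-x) hnx
      have h3 : ∑ j, (-x) j * ((ψ (Pi.single j 1) : ℤ) : ℝ) = -(T ψ) := by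
        simp [hT, Finset.sum_neg_distrib]
      rw [h3] at h2
      have : T ψ = 0 := le_antisymm (by linarith) h1
      exact this
    have hker : ∀ φ, T φ = 0 := by
      intro φ
      have : φ ∈ AddSubgroup.closure S := by rw [h]; trivial
      exact (AddSubgroup.closure_le T.ker).mpr hSk this
    funext j
    have := hker (LinearMap.proj j)
    simp only [hT, AddMonoidHom.coe_mk, ZeroHom.coe_mk, LinearMap.proj_apply] at this
    have e : ∑ j', x j' * (((Pi.single j' (1:ℤ) : Fin n → ℤ) j : ℤ) : ℝ) = x j := by
      rw [Finset.sum_eq_single j]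
      · simp
      · intro b _ hb
        simp [Pi.single_apply, hb]
      · intro hj; exact absurd (Finset.mem_univ j) hj
    rw [e] at this
    simpa using this
  · intro hconv
    have hpos : ∀ lam : Fin k → ℝ, (∀ i, 0 ≤ lam i) →
        (∑ i, lam i • fun j => ((v i j : ℝ))) = 0 →
        ∀ i, lam i • (fun j => ((v i j : ℝ))) = 0 := by
      intro lam hlam hsum i0
      set x : Fin n → ℝ := lam i0 • (fun j => ((v i0 j : ℝ))) with hx
      have hxC : x ∈ C := by
        rw [hC]
        refine ⟨fun i => if i = i0 then lam i0 else 0, ?_, ?_⟩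
        · intro i; dsimp only; split
          · exact hlam i0
          · exact le_rfl
        · rw [hx]
          rw [show (∑ i, (if i = i0 then lam i0 else 0) • fun j => ((v i j : ℝ)))
              = ∑ i, (if i = i0 then lam i0 • (fun j => ((v i j : ℝ))) else 0) from
            Finset.sum_congr rfl (fun i _ => by split <;> simp)]
          rw [Finset.sum_ite_eq' Finset.univ i0]
          simp
      have hnxC : -x ∈ C := by
        rw [hC]
        refine ⟨fun i => if i = i0 then 0 else lam i, ?_, ?_⟩
        · intro i; dsimp only; split
          · exact le_rfl
          · exact hlam i
        · have e : (∑ i, (if i = i0 then 0 else lam i) • fun j => ((v i j : ℝ)))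
              = ∑ i ∈ Finset.univ.erase i0, lam i • fun j => ((v i j : ℝ)) := by
            rw [← Finset.sum_erase Finset.univ (a := i0)
              (f := fun i => (if i = i0 then 0 else lam i) • fun j => ((v i j : ℝ)))
              (by simp)]
            apply Finset.sum_congr rfl
            intro i hi
            rw [if_neg (Finset.ne_of_mem_erase hi)]
          have e2 := Finset.add_sum_erase Finset.univ
            (fun i => lam i • fun j => ((v i j : ℝ))) (Finset.mem_univ i0)
          rw [hsum] at e2
          rw [e]
          have e2' : x + ∑ i ∈ Finset.univ.erase i0,
              (lam i • fun j => ((v i j : ℝ))) = 0 := e2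
          exact (eq_neg_of_add_eq_zero_right e2').symm
      exact hconv x hxC hnxC
    obtain ⟨yr, ε, hε, hyr⟩ := sep_step v hpos
    obtain ⟨y, hy⟩ := int_step v yr ε hε hyr
    set φ0 : Module.Dual ℤ (Fin n → ℤ) := ∑ j, y j • LinearMap.proj j with hφ0def
    have hφ0 : ∀ j, φ0 (Pi.single j 1) = y j := by
      intro j
      rw [hφ0def]
      simp only [LinearMap.sum_apply, LinearMap.smul_apply, LinearMap.proj_apply,
        smul_eq_mul]
      rw [Finset.sum_eq_single j]
      · simp
      · intro b _ hb
        simp [Pi.single_apply, (Ne.symm hb)]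
      · intro hj; exact absurd (Finset.mem_univ j) hj
    have hzero : ∀ i, (fun j => ((v i j : ℝ))) = 0 → ∀ j, v i j = 0 := by
      intro i hi j
      have h' : ((v i j : ℝ)) = 0 := by simpa using congrFun hi j
      exact_mod_cast h'
    have ha0 : ∀ i, (0:ℤ) ≤ ∑ j, v i j * y j := by
      intro i
      by_cases hvi : (fun j => ((v i j : ℝ))) = 0
      · have : ∑ j, v i j * y j = 0 :=
          Finset.sum_eq_zero (fun j _ => by rw [hzero i hvi j, zero_mul])
        omega
      · have := hy i hvi; omega
    have hmem : ∀ φ : Module.Dual ℤ (Fin n → ℤ),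
        (∀ i, (0:ℤ) ≤ ∑ j, v i j * φ (Pi.single j 1)) → φ ∈ S := by
      intro φ hφ
      intro x hx
      rw [hC] at hx
      obtain ⟨lam, hlam, rfl⟩ := hx
      have e : ∑ j, (∑ i, lam i • fun j' => ((v i j' : ℝ))) j *
            ((φ (Pi.single j 1) : ℤ) : ℝ)
          = ∑ i, lam i * (((∑ j, v i j * φ (Pi.single j 1) : ℤ) : ℝ)) := by
        push_cast
        simp only [Finset.sum_apply, Pi.smul_apply, smul_eq_mul, Finset.sum_mul]
        rw [Finset.sum_comm]
        apply Finset.sum_congr rfl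
        intro i _
        rw [Finset.mul_sum]
        apply Finset.sum_congr rfl
        intro j _
        ring
      rw [e]
      apply Finset.sum_nonneg
      intro i _
      exact mul_nonneg (hlam i) (by exact_mod_cast hφ i)
    rw [eq_top_iff]
    intro φ _
    set a : Fin k → ℤ := fun i => ∑ j, v i j * φ (Pi.single j 1) with ha
    set N : ℤ := ∑ i, |a i| with hN
    have hN0 : 0 ≤ N := Finset.sum_nonneg (fun i _ => abs_nonneg _)
    have hNa : ∀ i, -a i ≤ N := by
      intro i
      calc -a i ≤ |a i| := neg_le_abs _
        _ ≤ N := Finset.single_le_sum (f := fun i => |a i|)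
            (fun i _ => abs_nonneg _) (Finset.mem_univ i)
    have hψmem : (φ + N • φ0) ∈ S := by
      apply hmem
      intro i
      have e : ∑ j, v i j * (φ + N • φ0) (Pi.single j 1)
          = a i + N * ∑ j, v i j * y j := by
        simp only [LinearMap.add_apply, LinearMap.smul_apply, smul_eq_mul, hφ0]
        rw [ha]
        rw [Finset.mul_sum, ← Finset.sum_add_distrib]
        apply Finset.sum_congr rfl
        intro j _
        ring
      rw [e]
      by_cases hvi : (fun j => ((v i j : ℝ))) = 0
      · have h1 : a i = 0 := by
          rw [ha]
          exact Finset.sum_eq_zero (fun j _ => by rw [hzero i hvi j, zero_mul])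
        have h2 : ∑ j, v i j * y j = 0 :=
          Finset.sum_eq_zero (fun j _ => by rw [hzero i hvi j, zero_mul])
        rw [h1, h2]; simp
      · have h1 := hy i hvi
        have h2 := hNa i
        nlinarith
    have hφ0mem : φ0 ∈ S := by
      apply hmem
      intro i
      simpa only [hφ0] using ha0 i
    have hdecomp : φ = (φ + N • φ0) - N • φ0 := by
      rw [add_sub_cancel_right]
    rw [hdecomp]
    exact AddSubgroup.sub_mem _ (AddSubgroup.subset_closure hψmem)
      (AddSubgroup.zsmul_mem _ (AddSubgroup.subset_closure hφ0mem) N)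
end

section
/- Let M be a finitely generated submonoid of ℤ^n (under addition) and let G ≤ ℤ^n be the subgroup generated by M. Then for every x ∈ G, the vector x (viewed in ℝ^n) lies in the cone {λ_1 m_1 + … + λ_r m_r : r ∈ ℕ, m_i ∈ M, λ_i ∈ ℝ, λ_i ≥ 0} generated by M if and only if there exists a positive integer k with k·x ∈ M. In other words, (ℝ_{≥0}M) ∩ M^{gp} = M^{sat}. -/
open Finset

lemma cone_carath {E : Type*} [AddCommGroup E] [Module ℝ E] {r : ℕ}
    (v : Fin r → E) (t : Finset (Fin r)) :
    ∀ (lam : Fin r → ℝ), (∀ i, 0 ≤ lam i) → (∀ i ∉ t, lam i = 0) →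
    ∃ (s : Finset (Fin r)) (μ : Fin r → ℝ), (∀ i, 0 ≤ μ i) ∧ (∀ i ∉ s, μ i = 0) ∧
      (∑ i, μ i • v i = ∑ i, lam i • v i) ∧ LinearIndependent ℝ (fun i : s => v i) := by
  induction t using Finset.strongInduction with
  | _ t ih =>
  intro lam hnn hsupp
  by_cases hli : LinearIndependent ℝ (fun i : t => v i)
  · exact ⟨t, lam, hnn, hsupp, rfl, hli⟩
  · obtain ⟨g, hg0, i₁, hi₁⟩ := Fintype.not_linearIndependent_iff.1 hli
    -- make a relation with a positive coefficient
    obtain ⟨g, hg0, i₁, hi₁⟩ : ∃ g : t → ℝ, ∑ i, g i • v i = 0 ∧ ∃ i, 0 < g i := by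
      rcases lt_or_gt_of_ne hi₁ with h | h
      · exact ⟨-g, by simpa using congrArg Neg.neg hg0, i₁, by simpa using h⟩
      · exact ⟨g, hg0, i₁, h⟩
    classical
    set c : Fin r → ℝ := fun i => if h : i ∈ t then g ⟨i, h⟩ else 0 with hc
    have hcsum : ∑ i, c i • v i = 0 := by
      rw [← Finset.sum_subset (Finset.subset_univ t) (by
        intro i _ hi; simp [hc, hi])]
      rw [← Finset.sum_attach t (fun i => c i • v i)]
      simpa [hc] using hg0
    set A : Finset (Fin r) := t.filter (fun i => 0 < c i) with hA
    have hAne : A.Nonempty := ⟨i₁, by simpa [hA, hc] using hi₁⟩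
    obtain ⟨i₀, hi₀A, hi₀min⟩ := Finset.exists_min_image A (fun i => lam i / c i) hAne
    have hi₀t : i₀ ∈ t := (Finset.mem_filter.1 hi₀A).1
    have hci₀ : 0 < c i₀ := (Finset.mem_filter.1 hi₀A).2
    set α : ℝ := lam i₀ / c i₀ with hα
    have hα0 : 0 ≤ α := div_nonneg (hnn i₀) hci₀.le
    set μ : Fin r → ℝ := fun i => lam i - α * c i with hμ
    have hμnn : ∀ i, 0 ≤ μ i := by
      intro i
      by_cases hiA : i ∈ A
      · have h1 : α ≤ lam i / c i := hi₀min i hiA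
        have h2 : 0 < c i := (Finset.mem_filter.1 hiA).2
        have h3 : α * c i ≤ lam i := (le_div_iff₀ h2).1 h1
        simp only [hμ]; linarith
      · have hcle : c i ≤ 0 := by
          by_cases hit : i ∈ t
          · by_contra h
            exact hiA (Finset.mem_filter.2 ⟨hit, lt_of_not_ge (fun hh => h (by linarith))⟩)
          · simp [hc, hit]
        have : 0 ≤ -(α * c i) := by nlinarith
        have := hnn i
        simp only [hμ]; linarith
    have hμsupp : ∀ i ∉ t.erase i₀, μ i = 0 := by
      intro i hi
      by_cases hii : i = i₀
      · subst hii
        simp only [hμ, hα]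
        field_simp
        ring
      · have hit : i ∉ t := by
          intro h; exact hi (Finset.mem_erase.2 ⟨hii, h⟩)
        simp [hμ, hsupp i hit, hc, hit]
    have hsum : ∑ i, μ i • v i = ∑ i, lam i • v i := by
      have : ∑ i, μ i • v i = ∑ i, lam i • v i - α • ∑ i, c i • v i := by
        rw [Finset.smul_sum, ← Finset.sum_sub_distrib]
        congr 1; funext i
        simp [hμ, sub_smul, smul_smul]
      rw [this, hcsum, smul_zero, sub_zero]
    obtain ⟨s, ν, h1, h2, h3, h4⟩ := ih (t.erase i₀) (Finset.erase_ssubset hi₀t) μ hμnn hμsupp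
    exact ⟨s, ν, h1, h2, h3.trans hsum, h4⟩

lemma dual_eval {n : ℕ} (f : Module.Dual ℚ (Fin n → ℚ)) (y : Fin n → ℚ) :
    f y = ∑ j, y j * f (Pi.single j 1) := by
  conv_lhs => rw [← Finset.univ_sum_single y, map_sum]
  congr 1; funext j
  have h : Pi.single j (y j) = y j • (Pi.single j (1:ℚ) : Fin n → ℚ) := by
    rw [← Pi.single_smul, smul_eq_mul, mul_one]
  rw [h, map_smul, smul_eq_mul]

/-- Let `M` be a finitely generated submonoid of `ℤ^n` and `G` the
subgroup it generates. For `x ∈ G`, the vector `x` (viewed in `ℝ^n`) lies in the cone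
`ℝ_{≥0}M` generated by `M` if and only if `k·x ∈ M` for some positive integer `k`;
that is, `(ℝ_{≥0}M) ∩ M^{gp} = M^{sat}`. -/
theorem stmt12 (n : ℕ) (M : AddSubmonoid (Fin n → ℤ)) (hM : M.FG)
    (C : Set (Fin n → ℝ))
    (hC : C = {y : Fin n → ℝ | ∃ (r : ℕ) (m : Fin r → (Fin n → ℤ)) (lam : Fin r → ℝ),
      (∀ i, m i ∈ M) ∧ (∀ i, 0 ≤ lam i) ∧ y = ∑ i, lam i • fun j => ((m i j : ℝ))})
    (x : Fin n → ℤ) (hx : x ∈ AddSubgroup.closure (M : Set (Fin n → ℤ))) :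
    ((fun i => (x i : ℝ)) ∈ C) ↔ ∃ k : ℕ, 0 < k ∧ k • x ∈ M := by
  classical
  subst hC
  constructor
  · rintro ⟨r, m, lam, hm, hlam, hy⟩
    have hy' : (fun j => (x j : ℝ)) = ∑ i, lam i • (fun j => ((m i j : ℝ))) := hy
    obtain ⟨s, μ, hμnn, hμsupp, hsum, hli⟩ :=
      cone_carath (fun i j => ((m i j : ℝ))) Finset.univ lam hlam (by simp)
    have hxr : (fun j => (x j : ℝ)) = ∑ i : s, μ ↑i • (fun j => ((m (↑i) j : ℝ))) := by
      rw [hy', ← hsum,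
        show (∑ i : Fin r, μ i • (fun j => ((m i j : ℝ))))
            = ∑ i ∈ s, μ i • (fun j => ((m i j : ℝ))) from
          (Finset.sum_subset (Finset.subset_univ s)
            (fun i _ hi => by rw [hμsupp i hi, zero_smul])).symm]
      exact (Finset.sum_attach s (fun i => μ i • (fun j => ((m i j : ℝ))))).symm
    -- rationality
    have hspan : (fun j => (x j : ℚ)) ∈
        Submodule.span ℚ (Set.range (fun (i : s) (j : Fin n) => ((m (↑i) j : ℚ)))) := by
      by_contra hns
      obtain ⟨f, hf0, hfbot⟩ :=
        Submodule.exists_dual_map_eq_bot_of_notMem hns inferInstance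
      have hfv : ∀ i : s, f (fun j => ((m (↑i) j : ℚ))) = 0 := by
        intro i
        have h2 : f (fun j => ((m (↑i) j : ℚ))) ∈
            (Submodule.span ℚ (Set.range (fun (i : s) (j : Fin n) => ((m (↑i) j : ℚ))))).map f :=
          Submodule.mem_map_of_mem (Submodule.subset_span ⟨i, rfl⟩)
        rw [hfbot] at h2
        exact (Submodule.mem_bot ℚ).1 h2
      have key : ∑ j, ((f (Pi.single j 1) : ℚ) : ℝ) * (x j : ℝ) = 0 := by
        have e1 : ∑ j, ((f (Pi.single j 1) : ℚ) : ℝ) * (x j : ℝ)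
            = ∑ j, ((f (Pi.single j 1) : ℚ) : ℝ) *
                (∑ i : s, μ ↑i • (fun j => ((m (↑i) j : ℝ)))) j := by
          refine Finset.sum_congr rfl fun j _ => ?_
          rw [← congrFun hxr j]
        rw [e1]
        have e2 : ∑ j, ((f (Pi.single j 1) : ℚ) : ℝ) *
                (∑ i : s, μ ↑i • (fun j => ((m (↑i) j : ℝ)))) j
            = ∑ i : s, μ ↑i * (∑ j, ((f (Pi.single j 1) : ℚ) : ℝ) * (m (↑i) j : ℝ)) := by
          simp only [Finset.sum_apply, Pi.smul_apply, smul_eq_mul, Finset.mul_sum]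
          rw [Finset.sum_comm]
          refine Finset.sum_congr rfl fun i _ => ?_
          refine Finset.sum_congr rfl fun j _ => ?_
          ring
        rw [e2]
        apply Finset.sum_eq_zero
        intro i _
        have e3 : ∑ j, ((f (Pi.single j 1) : ℚ) : ℝ) * (m (↑i) j : ℝ)
            = ((f (fun j => ((m (↑i) j : ℚ))) : ℚ) : ℝ) := by
          rw [dual_eval f (fun j => ((m (↑i) j : ℚ)))]
          push_cast
          refine Finset.sum_congr rfl fun j _ => ?_
          ring
        rw [e3, hfv i, Rat.cast_zero, mul_zero]
      have key2 : ((f (fun j => (x j : ℚ)) : ℚ) : ℝ) = 0 := by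
        rw [dual_eval f (fun j => (x j : ℚ))]
        push_cast
        rw [← key]
        refine Finset.sum_congr rfl fun j _ => ?_
        ring
      exact hf0 (by exact_mod_cast key2)
    obtain ⟨q, hq⟩ := (Submodule.mem_span_range_iff_exists_fun ℚ).1 hspan
    -- coefficients agree with μ, hence nonnegative
    have hqreal : ∑ i : s, ((q i : ℝ) - μ ↑i) • (fun j => ((m (↑i) j : ℝ))) = 0 := by
      have h1 : ∑ i : s, (q i : ℝ) • (fun j => ((m (↑i) j : ℝ))) = fun j => (x j : ℝ) := by
        funext j
        have h2 := congrFun hq j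
        simp only [Finset.sum_apply, Pi.smul_apply, smul_eq_mul] at h2 ⊢
        exact_mod_cast h2
      simp only [sub_smul, Finset.sum_sub_distrib, h1, ← hxr, sub_self]
    have hqnn : ∀ i : s, 0 ≤ q i := by
      intro i
      have h3 := Fintype.linearIndependent_iff.1 hli (fun i => (q i : ℝ) - μ ↑i) hqreal i
      have h4 : (q i : ℝ) = μ ↑i := by linarith
      exact_mod_cast (by rw [h4]; exact hμnn ↑i : (0:ℝ) ≤ (q i : ℝ))
    -- clear denominators
    set d : ℕ := ∏ i : s, (q i).den with hd
    have hdpos : 0 < d := Finset.prod_pos (fun i _ => (q i).pos)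
    set N : s → ℕ := fun i => ((q i).num.toNat) * (d / (q i).den) with hN
    have hNq : ∀ i : s, ((N i : ℚ)) = (d : ℚ) * q i := by
      intro i
      have hq' : (q i) = ((q i).num : ℚ) / ((q i).den : ℚ) := (Rat.num_div_den _).symm
      have hnum : ((q i).num.toNat : ℤ) = (q i).num :=
        Int.toNat_of_nonneg (Rat.num_nonneg.2 (hqnn i))
      obtain ⟨e, he⟩ : (q i).den ∣ d := Finset.dvd_prod_of_mem _ (Finset.mem_univ i)
      have hpos := (q i).pos
      have hdiv : d / (q i).den = e := by rw [he]; exact Nat.mul_div_cancel_left e hpos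
      have hmain : ((q i).den : ℚ) * q i = ((q i).num : ℚ) := Rat.den_mul_eq_num (q i)
      rw [hN]
      simp only [hdiv]
      push_cast
      rw [show ((q i).num.toNat : ℚ) = ((q i).num : ℚ) by exact_mod_cast hnum, ← hmain, he]
      push_cast
      ring
    refine ⟨d, hdpos, ?_⟩
    have hkey : d • x = ∑ i : s, N i • m ↑i := by
      funext j
      have hj := congrFun hq j
      simp only [Finset.sum_apply, Pi.smul_apply, smul_eq_mul] at hj
      have h5 : ((d • x) j : ℚ) = ((∑ i : s, N i • m ↑i) j : ℚ) := by
        simp only [Pi.smul_apply, Finset.sum_apply, smul_eq_mul, nsmul_eq_mul]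
        push_cast
        rw [← hj, Finset.mul_sum]
        refine Finset.sum_congr rfl fun i _ => ?_
        rw [← mul_assoc, ← hNq i]
        simp only [Pi.mul_apply, Pi.natCast_apply]
        push_cast
        ring
      exact_mod_cast h5
    rw [hkey]
    exact AddSubmonoid.sum_mem M (fun i _ => AddSubmonoid.nsmul_mem M (hm ↑i) (N i))
  · rintro ⟨k, hk, hkx⟩
    refine ⟨1, ![k • x], ![1 / (k : ℝ)], fun i => by simpa using hkx, ?_, ?_⟩
    · intro i
      fin_cases i
      simp
    · funext j
      simp only [Fin.sum_univ_one]
      simp only [Matrix.cons_val_zero, Pi.smul_apply, smul_eq_mul]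
      push_cast
      field_simp
      rw [nsmul_eq_mul]; push_cast; ring
end

section
/- Let M be a finitely generated submonoid of ℤ^n (under addition). Then M is sharp, i.e. the only element m ∈ M with −m ∈ M is m = 0, if and only if the cone ℝ_{≥0}M = {λ_1 m_1 + … + λ_r m_r : r ∈ ℕ, m_i ∈ M, λ_i ∈ ℝ, λ_i ≥ 0} ⊆ ℝ^n is strictly convex, i.e. contains no nonzero x with −x ∈ ℝ_{≥0}M. -/
open Matrix

lemma indep_cast {ι κ : Type*} [Fintype ι] [Fintype κ] [DecidableEq ι] [DecidableEq κ]
    (v : ι → κ → ℚ) (h : LinearIndependent ℚ v) :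
    LinearIndependent ℝ (fun i k => ((v i k : ℝ))) := by
  classical
  set M : Matrix ι κ ℚ := Matrix.of v with hMdef
  have hinj : Function.Injective M.vecMul := Matrix.vecMul_injective_iff.mpr h
  have hker : LinearMap.ker M.vecMulLinear = ⊥ := by
    rw [LinearMap.ker_eq_bot]; rwa [Matrix.coe_vecMulLinear]
  obtain ⟨g, hg⟩ := M.vecMulLinear.exists_leftInverse_of_injective hker
  have hmat : (LinearMap.toMatrix' g) * Mᵀ = 1 := by
    have h1 : LinearMap.toMatrix' (g.comp M.vecMulLinear) = LinearMap.toMatrix' g * Mᵀ := by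
      rw [← Matrix.mulVecLin_transpose, LinearMap.toMatrix'_comp, ← Matrix.toLin'_apply',
        LinearMap.toMatrix'_toLin']
    rw [hg] at h1
    rw [← h1, LinearMap.toMatrix'_id]
  set f : ℚ →+* ℝ := algebraMap ℚ ℝ with hf
  have hmatR : (LinearMap.toMatrix' g).map f * (M.map f)ᵀ = 1 := by
    rw [← Matrix.transpose_map, ← Matrix.map_mul, hmat, Matrix.map_one f (map_zero f) (map_one f)]
  have hinjR : Function.Injective (M.map f).vecMul := by
    intro x y hxy
    have hxy' : x ᵥ* M.map f = y ᵥ* M.map f := hxy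
    have hz : (x - y) ᵥ* M.map f = 0 := by
      rw [Matrix.sub_vecMul, hxy', sub_self]
    have hsub : x - y = 0 := by
      calc x - y = ((LinearMap.toMatrix' g).map f * (M.map f)ᵀ) *ᵥ (x - y) := by
            rw [hmatR, Matrix.one_mulVec]
        _ = (LinearMap.toMatrix' g).map f *ᵥ ((M.map f)ᵀ *ᵥ (x - y)) := by
            rw [← Matrix.mulVec_mulVec]
        _ = (LinearMap.toMatrix' g).map f *ᵥ ((x - y) ᵥ* (M.map f)) := by
            rw [Matrix.mulVec_transpose]
        _ = 0 := by rw [hz, Matrix.mulVec_zero]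
    exact sub_eq_zero.mp hsub
  have := Matrix.vecMul_injective_iff.mp hinjR
  convert this using 1
  ext i k; rfl

lemma key {n : ℕ} {ι : Type*} [Fintype ι] [DecidableEq ι] (v : ι → Fin n → ℤ) :
    ∀ (N : ℕ) (S : Finset ι), S.card ≤ N → ∀ lam : ι → ℝ,
      (∀ i ∈ S, 0 < lam i) →
      (∑ i ∈ S, lam i • (fun j => ((v i j : ℝ)) : Fin n → ℝ)) = 0 → S.Nonempty →
      ∃ (c : ι → ℕ) (k : ι), k ∈ S ∧ 0 < c k ∧ (∀ i ∉ S, c i = 0) ∧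
        ∑ i ∈ S, (c i : ℤ) • v i = 0 := by
  intro N
  induction N with
  | zero =>
    intro S hcard lam _ _ hne
    exact absurd (Finset.card_pos.mpr hne) (by omega)
  | succ N IH =>
    intro S hcard lam hpos hsum hne
    classical
    -- Step 1: a nontrivial rational relation exists
    have hdep : ¬ LinearIndependent ℚ (fun i : S => (fun j => ((v i j : ℚ)) : Fin n → ℚ)) := by
      intro hind
      have hR := indep_cast _ hind
      have hR' : LinearIndependent ℝ (fun i : S => (fun j => ((v i j : ℝ)) : Fin n → ℝ)) := by
        convert hR using 2 with i j
        funext k; simp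
      rw [Fintype.linearIndependent_iff] at hR'
      obtain ⟨k, hk⟩ := hne
      have h0 : ∑ i : S, lam i • (fun j => ((v i j : ℝ)) : Fin n → ℝ) = 0 := by
        rw [Finset.sum_coe_sort S (fun i => lam i • (fun j => ((v i j : ℝ)) : Fin n → ℝ))]
        exact hsum
      have := hR' (fun i => lam i) h0 ⟨k, hk⟩
      exact absurd this (ne_of_gt (hpos k hk))
    obtain ⟨g, hgsum, i₀, hgi₀⟩ := Fintype.not_linearIndependent_iff.mp hdep
    set μ0 : ι → ℚ := fun i => if h : i ∈ S then g ⟨i, h⟩ else 0 with hμ0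
    have hμ0sum : ∑ i ∈ S, μ0 i • (fun j => ((v i j : ℚ)) : Fin n → ℚ) = 0 := by
      rw [← Finset.sum_coe_sort S (fun i => μ0 i • (fun j => ((v i j : ℚ)) : Fin n → ℚ))]
      rw [← hgsum]
      apply Finset.sum_congr rfl
      intro i _
      simp [hμ0, i.2]
    have hμ0ex : ∃ k ∈ S, μ0 k ≠ 0 := ⟨i₀, i₀.2, by simpa [hμ0, i₀.2] using hgi₀⟩
    have hW : ∃ μ : ι → ℚ,
        (∑ i ∈ S, μ i • (fun j => ((v i j : ℚ)) : Fin n → ℚ) = 0) ∧ ∃ k ∈ S, 0 < μ k := by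
      by_cases hp : ∃ k ∈ S, 0 < μ0 k
      · exact ⟨μ0, hμ0sum, hp⟩
      · push_neg at hp
        refine ⟨-μ0, ?_, ?_⟩
        · have : ∑ i ∈ S, (-μ0) i • (fun j => ((v i j : ℚ)) : Fin n → ℚ)
              = -∑ i ∈ S, μ0 i • (fun j => ((v i j : ℚ)) : Fin n → ℚ) := by
            rw [← Finset.sum_neg_distrib]
            exact Finset.sum_congr rfl fun i _ => by simp [neg_smul]
          rw [this, hμ0sum, neg_zero]
        · obtain ⟨k, hk, hkne⟩ := hμ0ex
          exact ⟨k, hk, by simpa using lt_of_le_of_ne (hp k hk) hkne⟩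
    obtain ⟨μ, hμsum, k₁, hk₁S, hk₁pos⟩ := hW
    have hj : ∀ j, ∑ i ∈ S, μ i * (v i j : ℚ) = 0 := by
      intro j
      have := congrFun hμsum j
      simpa [Finset.sum_apply] using this
    have hμRsum : ∑ i ∈ S, ((μ i : ℝ)) • (fun j => ((v i j : ℝ)) : Fin n → ℝ) = 0 := by
      funext j
      have h1 : ((∑ i ∈ S, μ i * (v i j : ℚ) : ℚ) : ℝ) = 0 := by rw [hj j]; norm_num
      push_cast at h1
      simpa [Finset.sum_apply] using h1
    -- Step 2: minimize
    set T : Finset ι := S.filter (fun i => 0 < μ i) with hT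
    obtain ⟨t₀, ht₀T, ht₀min⟩ := T.exists_min_image (fun i => lam i / (μ i : ℝ))
      ⟨k₁, Finset.mem_filter.mpr ⟨hk₁S, hk₁pos⟩⟩
    have ht₀S : t₀ ∈ S := (Finset.mem_filter.mp ht₀T).1
    have hμt₀ : 0 < μ t₀ := (Finset.mem_filter.mp ht₀T).2
    have hμRt₀ : (0:ℝ) < (μ t₀ : ℝ) := by exact_mod_cast hμt₀
    set t : ℝ := lam t₀ / (μ t₀ : ℝ) with htdef
    have ht : 0 < t := div_pos (hpos t₀ ht₀S) hμRt₀
    set lam' : ι → ℝ := fun i => lam i - t * (μ i : ℝ) with hlam'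
    have hlam'0 : lam' t₀ = 0 := by
      simp only [hlam', htdef]
      field_simp
      ring
    have hlam'nonneg : ∀ i ∈ S, 0 ≤ lam' i := by
      intro i hi
      by_cases hμi : 0 < μ i
      · have hiT : i ∈ T := Finset.mem_filter.mpr ⟨hi, hμi⟩
        have hmin := ht₀min i hiT
        have hμRi : (0:ℝ) < (μ i : ℝ) := by exact_mod_cast hμi
        have := (le_div_iff₀ hμRi).mp hmin
        simp only [hlam']
        linarith
      · have hμRi : ((μ i : ℝ)) ≤ 0 := by exact_mod_cast not_lt.mp hμi
        simp only [hlam']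
        nlinarith [hpos i hi, ht.le]
    have hlam'sum : ∑ i ∈ S, lam' i • (fun j => ((v i j : ℝ)) : Fin n → ℝ) = 0 := by
      have heq : ∀ i ∈ S, lam' i • (fun j => ((v i j : ℝ)) : Fin n → ℝ)
          = lam i • (fun j => ((v i j : ℝ)) : Fin n → ℝ)
            - t • (((μ i : ℝ)) • (fun j => ((v i j : ℝ)) : Fin n → ℝ)) := by
        intro i _
        rw [smul_smul, ← sub_smul]
      rw [Finset.sum_congr rfl heq, Finset.sum_sub_distrib, hsum, ← Finset.smul_sum, hμRsum,
        smul_zero, sub_zero]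
    set S' : Finset ι := S.filter (fun i => 0 < lam' i) with hS'def
    by_cases hS' : S'.Nonempty
    · -- recursive case
      have hsub : S' ⊆ S := Finset.filter_subset _ _
      have ht₀not : t₀ ∉ S' := by
        simp [hS'def, Finset.mem_filter, hlam'0]
      have hlt : S'.card < S.card :=
        Finset.card_lt_card ((Finset.ssubset_iff_of_subset hsub).mpr ⟨t₀, ht₀S, ht₀not⟩)
      have hsum' : ∑ i ∈ S', lam' i • (fun j => ((v i j : ℝ)) : Fin n → ℝ) = 0 := by
        rw [hS'def, Finset.sum_filter_of_ne]
        · exact hlam'sum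
        · intro i hi hne0
          by_contra hcon
          have : lam' i = 0 := le_antisymm (not_lt.mp hcon) (hlam'nonneg i hi)
          rw [this, zero_smul] at hne0
          exact hne0 rfl
      obtain ⟨c, k, hkS', hck, hcz, hcsum⟩ := IH S' (by omega) lam'
        (fun i hi => (Finset.mem_filter.mp hi).2) hsum' hS'
      refine ⟨c, k, hsub hkS', hck, fun i hi => hcz i (fun h => hi (hsub h)), ?_⟩
      rw [← hcsum, hS'def, Finset.sum_filter_of_ne]
      intro i hi hne0
      by_contra hcon
      have hiS' : i ∉ S' := by simp [hS'def, Finset.mem_filter, hcon]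
      rw [hcz i hiS'] at hne0
      simp at hne0
    · -- base case: μ positive on all of S
      have hall : ∀ i ∈ S, ¬ 0 < lam' i := by
        intro i hi hcon
        exact hS' ⟨i, Finset.mem_filter.mpr ⟨hi, hcon⟩⟩
      have hμpos : ∀ i ∈ S, 0 < μ i := by
        intro i hi
        have h0 : lam' i = 0 := le_antisymm (not_lt.mp (hall i hi)) (hlam'nonneg i hi)
        have hR : (0:ℝ) < (μ i : ℝ) := by
          simp only [hlam'] at h0
          nlinarith [hpos i hi]
        exact_mod_cast hR
      set N₀ : ℕ := ∏ i ∈ S, (μ i).den with hN₀def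
      have hN₀pos : 0 < N₀ := Finset.prod_pos fun i _ => (μ i).pos
      set c : ι → ℕ := fun i => if i ∈ S then (N₀ / (μ i).den) * (μ i).num.toNat else 0 with hcdef
      have hc : ∀ i ∈ S, ((c i : ℤ) : ℚ) = (N₀ : ℚ) * μ i := by
        intro i hi
        have hdvd : (μ i).den ∣ N₀ := Finset.dvd_prod_of_mem _ hi
        have hnum : (0:ℤ) < (μ i).num := Rat.num_pos.mpr (hμpos i hi)
        have hden : ((μ i).den : ℚ) ≠ 0 := by
          exact_mod_cast (μ i).den_nz
        obtain ⟨m, hm⟩ := hdvd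
        have hmdiv : N₀ / (μ i).den = m := by
          rw [hm]; exact Nat.mul_div_cancel_left _ (μ i).pos
        have key2 : ((N₀ / (μ i).den * (μ i).num.toNat : ℕ) : ℚ) = (N₀ : ℚ) * μ i := by
          rw [hmdiv, hm]
          push_cast [Int.toNat_of_nonneg hnum.le]
          have htn : (((μ i).num.toNat : ℕ) : ℚ) = ((μ i).num : ℚ) := by
            exact_mod_cast Int.toNat_of_nonneg hnum.le
          rw [htn]
          have hd : (μ i) * ((μ i).den : ℚ) = ((μ i).num : ℚ) := Rat.mul_den_eq_num _
          linear_combination (-(m:ℚ)) * hd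
        simp only [hcdef, if_pos hi]
        exact_mod_cast key2
      refine ⟨c, k₁, hk₁S, ?_, fun i hi => by simp [hcdef, hi], ?_⟩
      · have hdvd : (μ k₁).den ∣ N₀ := Finset.dvd_prod_of_mem _ hk₁S
        have h1 : 0 < N₀ / (μ k₁).den := Nat.div_pos (Nat.le_of_dvd hN₀pos hdvd) (μ k₁).pos
        have h2 : 0 < (μ k₁).num := Rat.num_pos.mpr hk₁pos
        have h3 : 0 < (μ k₁).num.toNat := by omega
        simp only [hcdef, if_pos hk₁S]
        positivity
      · funext j
        have hq : ((∑ i ∈ S, (c i : ℤ) * v i j : ℤ) : ℚ) = 0 := by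
          push_cast
          calc ∑ i ∈ S, ((c i : ℚ)) * ((v i j : ℚ))
              = ∑ i ∈ S, (N₀ : ℚ) * (μ i * (v i j : ℚ)) := by
                apply Finset.sum_congr rfl
                intro i hi
                have := hc i hi
                push_cast at this
                rw [this, mul_assoc]
            _ = (N₀ : ℚ) * ∑ i ∈ S, μ i * (v i j : ℚ) := by rw [Finset.mul_sum]
            _ = 0 := by rw [hj j, mul_zero]
        have hz : (∑ i ∈ S, (c i : ℤ) * v i j : ℤ) = 0 := by exact_mod_cast hq
        simpa [Finset.sum_apply, smul_eq_mul] using hz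


/-- A finitely generated submonoid `M` of `ℤ^n` is sharp (its only
element `m` with `-m ∈ M` is `0`) if and only if the cone `ℝ_{≥0}M ⊆ ℝ^n` generated by
`M` is strictly convex (contains no nonzero `x` with `-x` in the cone). -/
theorem stmt13 (n : ℕ) (M : AddSubmonoid (Fin n → ℤ)) (hM : M.FG)
    (C : Set (Fin n → ℝ))
    (hC : C = {y : Fin n → ℝ | ∃ (r : ℕ) (m : Fin r → (Fin n → ℤ)) (lam : Fin r → ℝ),
      (∀ i, m i ∈ M) ∧ (∀ i, 0 ≤ lam i) ∧ y = ∑ i, lam i • fun j => ((m i j : ℝ))}) :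
    (∀ m ∈ M, -m ∈ M → m = 0) ↔ (∀ x ∈ C, -x ∈ C → x = 0) := by
  classical
  constructor
  · intro hsharp x hx hnx
    by_contra hx0
    rw [hC] at hx hnx
    obtain ⟨r₁, m₁, lam₁, hm₁, hlam₁, hx1⟩ := hx
    obtain ⟨r₂, m₂, lam₂, hm₂, hlam₂, hx2⟩ := hnx
    set v : Fin r₁ ⊕ Fin r₂ → Fin n → ℤ := Sum.elim m₁ m₂ with hv
    set lam : Fin r₁ ⊕ Fin r₂ → ℝ := Sum.elim lam₁ lam₂ with hlam
    have hvM : ∀ i, v i ∈ M := by rintro (i|i); exacts [hm₁ i, hm₂ i]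
    have hlamnn : ∀ i, 0 ≤ lam i := by rintro (i|i); exacts [hlam₁ i, hlam₂ i]
    have htot : ∑ i : Fin r₁ ⊕ Fin r₂, lam i • (fun j => ((v i j : ℝ)) : Fin n → ℝ) = 0 := by
      rw [Fintype.sum_sum_type]
      simp only [hv, hlam, Sum.elim_inl, Sum.elim_inr]
      rw [← hx1, ← hx2]
      simp
    set S : Finset (Fin r₁ ⊕ Fin r₂) :=
      Finset.univ.filter (fun i => 0 < lam i ∧ v i ≠ 0) with hSdef
    have hterm0 : ∀ i, ¬(0 < lam i ∧ v i ≠ 0) →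
        lam i • (fun j => ((v i j : ℝ)) : Fin n → ℝ) = 0 := by
      intro i hcon
      rcases not_and_or.mp hcon with h | h
      · rw [le_antisymm (not_lt.mp h) (hlamnn i), zero_smul]
      · rw [not_not] at h
        have : (fun j => ((v i j : ℝ)) : Fin n → ℝ) = 0 := by
          funext j; rw [h]; simp
        rw [this, smul_zero]
    have hSsum : ∑ i ∈ S, lam i • (fun j => ((v i j : ℝ)) : Fin n → ℝ) = 0 := by
      rw [hSdef, Finset.sum_filter_of_ne]
      · exact htot
      · intro i _ hne
        by_contra hcon
        exact hne (hterm0 i hcon)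
    have hSne : S.Nonempty := by
      by_contra hemp
      rw [Finset.not_nonempty_iff_eq_empty] at hemp
      have hz := Finset.filter_eq_empty_iff.mp hemp
      apply hx0
      rw [hx1]
      apply Finset.sum_eq_zero
      intro i _
      have := hterm0 (Sum.inl i) (hz (Finset.mem_univ (Sum.inl i)))
      simpa only [hv, hlam, Sum.elim_inl] using this
    obtain ⟨c, k, hkS, hck, hcz, hcsum⟩ := key v S.card S le_rfl lam
      (fun i hi => ((Finset.mem_filter.mp hi).2).1) hSsum hSne
    have hvk : v k ≠ 0 := ((Finset.mem_filter.mp hkS).2).2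
    have hmem : (c k) • v k ∈ M := AddSubmonoid.nsmul_mem M (hvM k) _
    have hneg : -((c k : ℤ) • v k) = ∑ i ∈ S.erase k, (c i : ℤ) • v i := by
      rw [← Finset.add_sum_erase S _ hkS] at hcsum
      exact neg_eq_of_add_eq_zero_right hcsum
    have hnegmem : -((c k) • v k) ∈ M := by
      have hsm : ∑ i ∈ S.erase k, (c i : ℤ) • v i ∈ M := by
        apply AddSubmonoid.sum_mem
        intro i _
        rw [natCast_zsmul]
        exact AddSubmonoid.nsmul_mem M (hvM i) _
      rw [show -((c k) • v k) = -((c k : ℤ) • v k) by rw [natCast_zsmul], hneg]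
      exact hsm
    have h0 := hsharp _ hmem hnegmem
    have h0' : (c k : ℤ) • v k = 0 := by rw [natCast_zsmul]; exact h0
    rcases smul_eq_zero.mp h0' with h | h
    · have : c k = 0 := by exact_mod_cast h
      omega
    · exact hvk h
  · intro hconv m hm hnm
    have h1 : (fun j => ((m j : ℝ))) ∈ C := by
      rw [hC]
      refine ⟨1, fun _ => m, fun _ => 1, fun _ => hm, fun _ => zero_le_one, ?_⟩
      simp
    have h2 : -(fun j => ((m j : ℝ))) ∈ C := by
      rw [hC]
      refine ⟨1, fun _ => -m, fun _ => 1, fun _ => hnm, fun _ => zero_le_one, ?_⟩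
      funext j
      simp
    have h0 := hconv _ h1 h2
    funext j
    have := congrFun h0 j
    simp only [Pi.zero_apply] at this ⊢
    exact_mod_cast this
end
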